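/- (Lower resolvent bound.) Let A be unbounded strictly positive selfadjoint and f : σ(A) → (0,∞) continuous with sup_{s∈σ(A)} s^β f(s) < ∞ for some β > 0, and assume σ(𝒜) ∩ iℝ = ∅. Then limsup_{λ→∞} λ^{−2β} ‖(iλ − 𝒜)^{-1}‖_{L(ℋ)} > 0. In particular, for any sequence s_n ∈ σ(A) with s_n → ∞, eventually ‖(i√(s_n) − 𝒜)^{-1}‖ ≥ c s_n^β for some structural constant c > 0. -/

import Mathlib

open MeasureTheory Filter Complex

noncomputable section

variable {Ω : Type*} [MeasurableSpace Ω]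

/-- `∫ a |u|²`: the squared `H¹ = D(A^{1/2})`-seminorm in the
multiplication-operator model of the spectral theorem, where `A` acts as
multiplication by `a`. -/
def aInt (μ : Measure Ω) (a : Ω → ℝ) (u : Ω → ℂ) : ENNReal :=
  ∫⁻ ω, ENNReal.ofReal (a ω * ‖u ω‖ ^ 2) ∂μ

/-- Membership in `H¹ = D(A^{1/2})`. -/
def memH1 (μ : Measure Ω) (a : Ω → ℝ) (u : Ω → ℂ) : Prop :=
  MemLp u 2 μ ∧ aInt μ a u < ⊤

/-- Membership in the domain of the generator `𝒜(u,v) = (v, -Au - f(A)v)`: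
`u, v ∈ H¹` and `Au + f(A)v ∈ H`. -/
def memDom (μ : Measure Ω) (a : Ω → ℝ) (f : ℝ → ℝ) (u v : Ω → ℂ) : Prop :=
  memH1 μ a u ∧ memH1 μ a v ∧
    MemLp (fun ω => (a ω : ℂ) * u ω + (f (a ω) : ℂ) * v ω) 2 μ

/-- Squared norm in the phase space `ℋ = H¹ × H`. -/
def hsq (μ : Measure Ω) (a : Ω → ℝ) (u v : Ω → ℂ) : ENNReal :=
  aInt μ a u + ∫⁻ ω, ENNReal.ofReal (‖v ω‖ ^ 2) ∂μ

/-- `ξ` belongs to the resolvent set of `𝒜`: the equation `ξ z - 𝒜 z = ẑ` has,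
for every `ẑ ∈ ℋ`, a unique solution `z ∈ D(𝒜)`, depending boundedly on `ẑ`. -/
def resSet (μ : Measure Ω) (a : Ω → ℝ) (f : ℝ → ℝ) (ξ : ℂ) : Prop :=
  ∃ C : ℝ, ∀ uh vh : Ω → ℂ, memH1 μ a uh → MemLp vh 2 μ →
    ∃ u v : Ω → ℂ, memDom μ a f u v ∧
      (fun ω => ξ * u ω - v ω) =ᵐ[μ] uh ∧
      (fun ω => ξ * v ω + ((a ω : ℂ) * u ω + (f (a ω) : ℂ) * v ω)) =ᵐ[μ] vh ∧
      hsq μ a u v ≤ ENNReal.ofReal C * hsq μ a uh vh ∧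
      ∀ u' v' : Ω → ℂ, memDom μ a f u' v' →
        (fun ω => ξ * u' ω - v' ω) =ᵐ[μ] uh →
        (fun ω => ξ * v' ω + ((a ω : ℂ) * u' ω + (f (a ω) : ℂ) * v' ω)) =ᵐ[μ] vh →
        u' =ᵐ[μ] u ∧ v' =ᵐ[μ] v

/-- The set `Λ` of positive limits of `f(sₙ)/sₙ` along sequences `sₙ → ∞` in `σ`. -/
def limSet (σS : Set ℝ) (f : ℝ → ℝ) : Set ℝ :=
  {ℓ : ℝ | 0 < ℓ ∧ ∃ s : ℕ → ℝ, (∀ n, s n ∈ σS) ∧ Tendsto s atTop atTop ∧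
    Tendsto (fun n => f (s n) / s n) atTop (nhds ℓ)}

/-- `resNormGE μ a f lam K` expresses that the resolvent `(i·lam - 𝒜)⁻¹` has
operator norm at least `K`: there is a nonzero datum `ẑ = (û,v̂) ∈ ℋ` whose
solution `z = (u,v) ∈ D(𝒜)` of `i·lam·z - 𝒜z = ẑ` satisfies
`‖z‖_ℋ ≥ K ‖ẑ‖_ℋ`. -/
def resNormGE (μ : Measure Ω) (a : Ω → ℝ) (f : ℝ → ℝ) (lam K : ℝ) : Prop :=
  ∃ uh vh u v : Ω → ℂ, memH1 μ a uh ∧ MemLp vh 2 μ ∧ memDom μ a f u v ∧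
    (fun ω => (lam : ℂ) * Complex.I * u ω - v ω) =ᵐ[μ] uh ∧
    (fun ω => (lam : ℂ) * Complex.I * v ω +
      ((a ω : ℂ) * u ω + (f (a ω) : ℂ) * v ω)) =ᵐ[μ] vh ∧
    hsq μ a uh vh ≠ 0 ∧ hsq μ a uh vh ≠ ⊤ ∧
    ENNReal.ofReal (K ^ 2) * hsq μ a uh vh ≤ hsq μ a u v

/- For `s ∈ σ(A)` and `λ = √s`, the resolvent equation `iλ z - 𝒜 z = (0, w)` is solved by
`u = w / d(a)`, `v = iλ u`, where `d(t) = t - λ² + iλ f(t)` is the symbol of `-λ² + A + iλ f(A)`.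
Taking for `w` the indicator of a set of finite positive measure on which `a` stays close to `s`,
continuity of `f` gives `|d(a)|² ≤ 5 s f(s)²` there, so `‖v‖² ≥ ‖w‖² / (5 f(s)²)`. The bound
`s^β f(s) ≤ C` turns `1 / f(s)` into a multiple of `s^β = λ^{2β}`. -/

theorem ContinuousOn.aemeasurable_comp {α β γ : Type*} [MeasurableSpace α]
    [TopologicalSpace β] [MeasurableSpace β] [OpensMeasurableSpace β]
    [TopologicalSpace γ] [MeasurableSpace γ] [BorelSpace γ]
    {μ : Measure α} {f : β → γ} {s : Set β} {a : α → β}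
    (hf : ContinuousOn f s) (hs : MeasurableSet s) (ha : Measurable a)
    (hmem : ∀ᵐ ω ∂μ, a ω ∈ s) : AEMeasurable (fun ω => f (a ω)) μ := by
  have hfull : ∀ᵐ t ∂μ.map a, t ∈ s := (ae_map_iff ha.aemeasurable hs).2 hmem
  have hf' : AEMeasurable f (μ.map a) := by
    simpa only [Measure.restrict_eq_self_of_ae_mem hfull] using hf.aemeasurable (μ := μ.map a) hs
  exact hf'.comp_measurable ha

def modeSymbol (f : ℝ → ℝ) (lam t : ℝ) : ℂ :=
  ((t - lam ^ 2 : ℝ) : ℂ) + ((lam * f t : ℝ) : ℂ) * I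

theorem modeSymbol_mul (f : ℝ → ℝ) (lam t : ℝ) (u : ℂ) :
    (lam : ℂ) * I * ((lam : ℂ) * I * u) + ((t : ℂ) * u + (f t : ℂ) * ((lam : ℂ) * I * u)) =
      modeSymbol f lam t * u := by
  simp only [modeSymbol]
  push_cast
  linear_combination (lam : ℂ) ^ 2 * u * I_sq

theorem norm_modeSymbol_sq (f : ℝ → ℝ) (lam t : ℝ) :
    ‖modeSymbol f lam t‖ ^ 2 = (t - lam ^ 2) ^ 2 + (lam * f t) ^ 2 := by
  rw [modeSymbol, Complex.sq_norm, normSq_add_mul_I]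

theorem abs_mul_le_norm_modeSymbol (f : ℝ → ℝ) (lam t : ℝ) :
    |lam * f t| ≤ ‖modeSymbol f lam t‖ := by
  have him : (modeSymbol f lam t).im = lam * f t := by
    simp only [modeSymbol, add_im, ofReal_im, mul_I_im, ofReal_re, zero_add]
  exact him ▸ abs_im_le_norm (modeSymbol f lam t)

theorem modeSymbol_sqrt_bounds {f : ℝ → ℝ} {s t : ℝ} (hs : 0 < s) (hfs : 0 < f s)
    (ht : |t - s| ≤ Real.sqrt s * f s) (hft : |f t - f s| < f s / 2) :
    Real.sqrt s * f s / 2 ≤ ‖modeSymbol f (Real.sqrt s) t‖ ∧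
      ‖modeSymbol f (Real.sqrt s) t‖ ^ 2 ≤ 5 * s * f s ^ 2 := by
  set lam := Real.sqrt s
  have hlam : 0 < lam := Real.sqrt_pos.2 hs
  have hlam2 : lam ^ 2 = s := Real.sq_sqrt hs.le
  obtain ⟨hft_lo, hft_hi⟩ := abs_lt.1 hft
  have hre : (t - lam ^ 2) ^ 2 ≤ (lam * f s) ^ 2 := by
    rwa [hlam2, sq_le_sq, abs_of_pos (by positivity : 0 < lam * f s)]
  have him : (lam * f t) ^ 2 ≤ (lam * (2 * f s)) ^ 2 :=
    pow_le_pow_left₀ (mul_pos hlam (by linarith)).le (by gcongr; linarith) 2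
  constructor
  · calc lam * f s / 2 ≤ lam * f t := by nlinarith
      _ ≤ |lam * f t| := le_abs_self _
      _ ≤ ‖modeSymbol f lam t‖ := abs_mul_le_norm_modeSymbol f lam t
  · have h5 : (lam * f s) ^ 2 + (lam * (2 * f s)) ^ 2 = 5 * s * f s ^ 2 := by
      simp only [mul_pow, hlam2]
      ring
    rw [norm_modeSymbol_sq]
    linarith

section

variable {μ : Measure Ω} {a : Ω → ℝ} {f : ℝ → ℝ}

theorem memH1.const_mul {u : Ω → ℂ} (hu : memH1 μ a u) (c : ℂ) :
    memH1 μ a (fun ω => c * u ω) := by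
  refine ⟨hu.1.const_mul c, ?_⟩
  have hscale : ∀ ω, ENNReal.ofReal (a ω * ‖c * u ω‖ ^ 2) =
      ENNReal.ofReal (‖c‖ ^ 2) * ENNReal.ofReal (a ω * ‖u ω‖ ^ 2) := fun ω => by
    rw [← ENNReal.ofReal_mul (by positivity), norm_mul]
    ring_nf
  rw [aInt, funext hscale, lintegral_const_mul' _ _ ENNReal.ofReal_ne_top]
  exact ENNReal.mul_lt_top ENNReal.ofReal_lt_top hu.2

theorem memH1_indicator {S : Set Ω} {g : Ω → ℂ}
    (hS : MeasurableSet S) (hμS : μ S ≠ ⊤) (hg : AEStronglyMeasurable g μ) {M B : ℝ}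
    (hbd : ∀ ω ∈ S, ‖g ω‖ ≤ M ∧ |a ω| ≤ B) : memH1 μ a (S.indicator g) := by
  have : IsFiniteMeasure (μ.restrict S) := isFiniteMeasure_restrict.2 hμS
  have hgM : ∀ᵐ ω ∂μ.restrict S, ‖g ω‖ ≤ M :=
    (ae_restrict_iff' hS).2 (.of_forall fun ω hω => (hbd ω hω).1)
  refine ⟨(memLp_indicator_iff_restrict hS).2 (MemLp.of_bound hg.restrict M hgM), ?_⟩
  have hpt : ∀ ω ∈ S, ENNReal.ofReal (a ω * ‖g ω‖ ^ 2) ≤ ENNReal.ofReal (B * M ^ 2) :=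
    fun ω hω => by
      obtain ⟨hgω, haω⟩ := hbd ω hω
      apply ENNReal.ofReal_le_ofReal
      exact mul_le_mul ((le_abs_self _).trans haω) (pow_le_pow_left₀ (norm_nonneg _) hgω 2)
        (sq_nonneg _) ((abs_nonneg _).trans haω)
  have hind : (fun ω => ENNReal.ofReal (a ω * ‖S.indicator g ω‖ ^ 2)) =
      S.indicator fun ω => ENNReal.ofReal (a ω * ‖g ω‖ ^ 2) := by
    funext ω
    by_cases hω : ω ∈ S <;> simp [hω]
  calc aInt μ a (S.indicator g)
      = ∫⁻ ω in S, ENNReal.ofReal (a ω * ‖g ω‖ ^ 2) ∂μ := by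
        rw [aInt, hind, lintegral_indicator hS]
    _ ≤ ∫⁻ _ in S, ENNReal.ofReal (B * M ^ 2) ∂μ := setLIntegral_mono measurable_const hpt
    _ < ⊤ := by
        rw [setLIntegral_const]
        exact ENNReal.mul_lt_top ENNReal.ofReal_lt_top hμS.lt_top

theorem memDom_of_eq {u v w : Ω → ℂ} {ξ : ℂ}
    (hu : memH1 μ a u) (hv : memH1 μ a v) (hw : MemLp w 2 μ)
    (heq : ∀ ω, ξ * v ω + ((a ω : ℂ) * u ω + (f (a ω) : ℂ) * v ω) = w ω) :
    memDom μ a f u v := by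
  refine ⟨hu, hv, ?_⟩
  rw [show (fun ω => (a ω : ℂ) * u ω + (f (a ω) : ℂ) * v ω) = fun ω => w ω - ξ * v ω
    from funext fun ω => eq_sub_of_add_eq' (heq ω)]
  exact hw.sub (hv.1.const_mul ξ)

theorem hsq_zero_indicator_one {S : Set Ω} (hS : MeasurableSet S) :
    hsq μ a 0 (S.indicator fun _ => 1) = μ S := by
  have hw2 : (fun ω => ENNReal.ofReal (‖S.indicator (fun _ => (1 : ℂ)) ω‖ ^ 2)) =
      S.indicator fun _ => 1 := by
    funext ω
    by_cases hω : ω ∈ S <;> simp [hω]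
  have h0 : aInt μ a 0 = 0 := by simp [aInt]
  rw [hsq, h0, hw2, lintegral_indicator_const hS, one_mul, zero_add]

theorem resNormGE_of_modeSymbol_bounds (ha : Measurable a) (hfa : AEMeasurable (fun ω => f (a ω)) μ)
    {S : Set Ω} (hS : MeasurableSet S) (hμS0 : μ S ≠ 0) (hμS : μ S ≠ ⊤)
    {lam ρ B K : ℝ} (hρ : 0 < ρ)
    (hbd : ∀ ω ∈ S, |a ω| ≤ B ∧ ρ ≤ ‖modeSymbol f lam (a ω)‖ ∧
      K ^ 2 * ‖modeSymbol f lam (a ω)‖ ^ 2 ≤ lam ^ 2) :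
    resNormGE μ a f lam K := by
  set d : Ω → ℂ := fun ω => modeSymbol f lam (a ω)
  set u : Ω → ℂ := S.indicator fun ω => (d ω)⁻¹
  set v : Ω → ℂ := fun ω => (lam : ℂ) * I * u ω
  set w : Ω → ℂ := S.indicator fun _ => 1
  have hd_pos : ∀ ω ∈ S, 0 < ‖d ω‖ := fun ω hω => hρ.trans_le (hbd ω hω).2.1
  have hdm : AEMeasurable d μ := by
    have hre : Measurable fun ω => ((a ω - lam ^ 2 : ℝ) : ℂ) := by fun_prop
    exact hre.aemeasurable.add
      ((Complex.measurable_ofReal.comp_aemeasurable (hfa.const_mul lam)).mul_const I)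
  have hu : memH1 μ a u := by
    refine memH1_indicator hS hμS hdm.inv.aestronglyMeasurable (M := ρ⁻¹) fun ω hω =>
      ⟨?_, (hbd ω hω).1⟩
    rw [norm_inv]
    exact inv_anti₀ hρ (hbd ω hω).2.1
  have hv : memH1 μ a v := hu.const_mul _
  have hw : MemLp w 2 μ := memLp_indicator_const 2 hS 1 (Or.inr hμS)
  have hsol : ∀ ω, (lam : ℂ) * I * v ω + ((a ω : ℂ) * u ω + (f (a ω) : ℂ) * v ω) = w ω := by
    intro ω
    by_cases hω : ω ∈ S
    · simp only [v, modeSymbol_mul, u, w, Set.indicator_of_mem hω]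
      exact mul_inv_cancel₀ (norm_pos_iff.1 (hd_pos ω hω))
    · simp [v, u, w, Set.indicator_of_notMem hω]
  have hdom : memDom μ a f u v := memDom_of_eq hu hv hw hsol
  have hdatum : hsq μ a 0 w = μ S := hsq_zero_indicator_one hS
  have hv_lb : S.indicator (fun _ => ENNReal.ofReal (K ^ 2)) ≤
      fun ω => ENNReal.ofReal (‖v ω‖ ^ 2) := by
    refine Set.indicator_le fun ω hω => ENNReal.ofReal_le_ofReal ?_
    have hv2 : ‖v ω‖ ^ 2 = lam ^ 2 / ‖d ω‖ ^ 2 := by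
      simp only [v, u, Set.indicator_of_mem hω, norm_mul, norm_I, norm_inv, Complex.norm_real,
        Real.norm_eq_abs, mul_one, mul_pow, sq_abs, inv_pow, div_eq_mul_inv]
    rw [hv2, le_div_iff₀ (pow_pos (hd_pos ω hω) 2)]
    exact (hbd ω hω).2.2
  refine ⟨0, w, u, v, ⟨MemLp.zero, by simp [aInt]⟩, hw, hdom, .of_eq (funext fun ω => ?_),
    .of_eq (funext hsol), by rwa [hdatum], by rwa [hdatum], ?_⟩
  · simp [v]
  calc ENNReal.ofReal (K ^ 2) * hsq μ a 0 w
      = ∫⁻ ω, S.indicator (fun _ => ENNReal.ofReal (K ^ 2)) ω ∂μ := by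
        rw [hdatum, lintegral_indicator_const hS]
    _ ≤ ∫⁻ ω, ENNReal.ofReal (‖v ω‖ ^ 2) ∂μ := lintegral_mono hv_lb
    _ ≤ hsq μ a u v := le_add_self

theorem resNormGE_sqrt_of_mem [SigmaFinite μ] (ha : Measurable a) {σS : Set ℝ}
    (hcl : IsClosed σS) (hmem : ∀ᵐ ω ∂μ, a ω ∈ σS) (hfc : ContinuousOn f σS)
    {s : ℝ} (hs : 0 < s) (hsσ : s ∈ σS) (hfs : 0 < f s)
    (hmin : ∀ ε > 0, μ {ω | |a ω - s| < ε} ≠ 0) {K : ℝ} (hK : K ^ 2 * (5 * f s ^ 2) ≤ 1) :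
    resNormGE μ a f (Real.sqrt s) K := by
  obtain ⟨δ, hδ, hfδ⟩ := Metric.continuousWithinAt_iff.1 (hfc s hsσ) (f s / 2) (half_pos hfs)
  set ε := min δ (Real.sqrt s * f s)
  have hε : 0 < ε := lt_min hδ (mul_pos (Real.sqrt_pos.2 hs) hfs)
  set E := {ω | |a ω - s| < ε} ∩ a ⁻¹' σS
  have hE : MeasurableSet E :=
    (measurableSet_lt (by fun_prop) measurable_const).inter (ha hcl.measurableSet)
  have hμE : μ E ≠ 0 := by
    rw [measure_inter_conull (s := {ω | |a ω - s| < ε}) (t := a ⁻¹' σS) (ae_iff.1 hmem)]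
    exact hmin ε hε
  obtain ⟨S, hS, hSE, hμS0, hμS⟩ :=
    Measure.exists_subset_measure_lt_top hE (pos_iff_ne_zero.2 hμE)
  refine resNormGE_of_modeSymbol_bounds ha (hfc.aemeasurable_comp hcl.measurableSet ha hmem)
    hS hμS0.ne' hμS.ne (ρ := Real.sqrt s * f s / 2) (B := s + ε) (by positivity) fun ω hω => ?_
  obtain ⟨hclose, haσ⟩ : |a ω - s| < ε ∧ a ω ∈ σS := hSE hω
  have hfa : |f (a ω) - f s| < f s / 2 := by
    have hnear : dist (a ω) s < δ := by
      rw [Real.dist_eq]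
      exact hclose.trans_le (min_le_left _ _)
    simpa only [Real.dist_eq] using hfδ haσ hnear
  have hclose' : |a ω - s| ≤ Real.sqrt s * f s := hclose.le.trans (min_le_right _ _)
  obtain ⟨hlo, hd2⟩ := modeSymbol_sqrt_bounds hs hfs hclose' hfa
  refine ⟨abs_le.2 ⟨by linarith [abs_lt.1 hclose], by linarith [abs_lt.1 hclose]⟩, hlo, ?_⟩
  calc K ^ 2 * ‖modeSymbol f (Real.sqrt s) (a ω)‖ ^ 2 ≤ K ^ 2 * (5 * s * f s ^ 2) :=
        mul_le_mul_of_nonneg_left hd2 (sq_nonneg K)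
    _ = Real.sqrt s ^ 2 * (K ^ 2 * (5 * f s ^ 2)) := by rw [Real.sq_sqrt hs.le]; ring
    _ ≤ Real.sqrt s ^ 2 := mul_le_of_le_one_right (sq_nonneg _) hK

end

theorem resolvent_lower_bound_general
    (μ : Measure Ω) [SigmaFinite μ] (a : Ω → ℝ) (ha : Measurable a)
    (σS : Set ℝ) (hcl : IsClosed σS)
    (s₀ : ℝ) (hs₀ : 0 < s₀) (hlb : ∀ s ∈ σS, s₀ ≤ s)
    (hunb : ¬ BddAbove σS)
    (hmem : ∀ᵐ ω ∂μ, a ω ∈ σS)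
    (hmin : ∀ s ∈ σS, ∀ ε > 0, μ {ω | |a ω - s| < ε} ≠ 0)
    (f : ℝ → ℝ) (hfc : ContinuousOn f σS) (hfpos : ∀ s ∈ σS, 0 < f s)
    (β : ℝ)
    (hub : ∃ C : ℝ, ∀ s ∈ σS, s ^ β * f s ≤ C) :
    (∃ c : ℝ, 0 < c ∧ ∃ L : ℕ → ℝ, Tendsto L atTop atTop ∧
        ∀ n, resNormGE μ a f (L n) (c * L n ^ (2 * β))) ∧
      ∃ c : ℝ, 0 < c ∧ ∀ sn : ℕ → ℝ, (∀ n, sn n ∈ σS) → Tendsto sn atTop atTop →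
        ∀ᶠ n in atTop, resNormGE μ a f (Real.sqrt (sn n)) (c * sn n ^ β) := by
  obtain ⟨C, hC⟩ := hub
  set C' := max C 1
  have hC' : 0 < C' := lt_max_of_lt_right one_pos
  have hkey : ∀ s ∈ σS, resNormGE μ a f (Real.sqrt s) ((3 * C')⁻¹ * s ^ β) := by
    intro s hsσ
    have hs : 0 < s := hs₀.trans_le (hlb s hsσ)
    have hfs := hfpos s hsσ
    have hratio : (s ^ β * f s / C') ^ 2 ≤ 1 :=
      pow_le_one₀ (by positivity) ((div_le_one hC').2 ((hC s hsσ).trans (le_max_left _ _)))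
    refine resNormGE_sqrt_of_mem ha hcl hmem hfc hs hsσ hfs (hmin s hsσ) ?_
    calc ((3 * C')⁻¹ * s ^ β) ^ 2 * (5 * f s ^ 2) = 5 / 9 * (s ^ β * f s / C') ^ 2 := by ring
      _ ≤ 1 := by linarith
  choose t htσ ht using fun n : ℕ => not_bddAbove_iff.1 hunb n
  have hL : Tendsto (fun n => Real.sqrt (t n)) atTop atTop :=
    Real.tendsto_sqrt_atTop.comp
      (tendsto_atTop_mono (fun n => (ht n).le) tendsto_natCast_atTop_atTop)
  refine ⟨⟨(3 * C')⁻¹, by positivity, _, hL, fun n => ?_⟩,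
    ⟨(3 * C')⁻¹, by positivity, fun sn hsn _ => .of_forall fun n => hkey _ (hsn n)⟩⟩
  have hpow : Real.sqrt (t n) ^ (2 * β) = t n ^ β := by
    rw [Real.sqrt_eq_rpow, ← Real.rpow_mul (hs₀.le.trans (hlb _ (htσ n)))]
    ring_nf
  rw [hpow]
  exact hkey _ (htσ n)

/-- **Lower resolvent bound.** In the multiplication-operator model of the
spectral theorem, let `A` (multiplication by `a`) be unbounded strictly
positive selfadjoint, `f : σ(A) → (0,∞)` continuous with
`sup_{s∈σ(A)} s^β f(s) < ∞` for some `β > 0`, and assume `σ(𝒜) ∩ iℝ = ∅`.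
Then `limsup_{λ→∞} λ^{-2β} ‖(iλ - 𝒜)⁻¹‖ > 0`: there are `c > 0` and `λₙ → ∞`
with `‖(iλₙ - 𝒜)⁻¹‖ ≥ c λₙ^{2β}`; in particular, for every sequence
`sₙ ∈ σ(A)` with `sₙ → ∞`, eventually `‖(i√sₙ - 𝒜)⁻¹‖ ≥ c sₙ^β`. -/
theorem resolvent_lower_bound
    (μ : Measure Ω) [SigmaFinite μ] (a : Ω → ℝ) (ha : Measurable a)
    (σS : Set ℝ) (hcl : IsClosed σS) (hne : σS.Nonempty)
    (s₀ : ℝ) (hs₀ : 0 < s₀) (hlb : ∀ s ∈ σS, s₀ ≤ s)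
    (hunb : ¬ BddAbove σS)
    (hmem : ∀ᵐ ω ∂μ, a ω ∈ σS)
    (hmin : ∀ s ∈ σS, ∀ ε > 0, μ {ω | |a ω - s| < ε} ≠ 0)
    (f : ℝ → ℝ) (hfc : ContinuousOn f σS) (hfpos : ∀ s ∈ σS, 0 < f s)
    (β : ℝ) (hβ : 0 < β)
    (hub : ∃ C : ℝ, ∀ s ∈ σS, s ^ β * f s ≤ C)
    (hres : ∀ ξ : ℂ, ξ.re = 0 → resSet μ a f ξ) :
    (∃ c : ℝ, 0 < c ∧ ∃ L : ℕ → ℝ, Tendsto L atTop atTop ∧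
        ∀ n, resNormGE μ a f (L n) (c * L n ^ (2 * β))) ∧
      ∃ c : ℝ, 0 < c ∧ ∀ sn : ℕ → ℝ, (∀ n, sn n ∈ σS) → Tendsto sn atTop atTop →
        ∀ᶠ n in atTop, resNormGE μ a f (Real.sqrt (sn n)) (c * sn n ^ β) :=
  resolvent_lower_bound_general μ a ha σS hcl s₀ hs₀ hlb hunb hmem hmin f hfc hfpos β hub
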